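/- arXiv:1510.05127 — 2 statements merged into one kernel-verified Lean document; each statement's English description precedes it below -/
import Mathlib

section
/- Let X be a completely metrizable topological space of weight κ ≥ ℵ₀, and let 𝓔 be a countable family of relations on X, each relation R ∈ 𝓔 being a Gδ subset of X^r for some finite arity r ≥ 1. Then exactly one of the following two statements holds: (S) there exists an ordinal γ < κ⁺ such that every 𝓔-clique in X has Cantor–Bendixson rank < γ; (P) there exists a perfect 𝓔-clique in X. -/
/-!
Fix a basis `B` of cardinality `κ` and write each relation as `R n = ⋂ m, U n m` with `U n m`
open. A configuration of level `ℓ` is a finite family of nonempty basic boxes of radius at most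
`2⁻¹ ^ ℓ` with pairwise disjoint closures, such that for `n, m ≤ ℓ` the product of the closures of
any `r n` distinct boxes lies in `U n m`. A configuration is refined by one of level `ℓ + 1` whose
boxes have closures inside old boxes, each old box containing two new ones. Repeatedly discarding
the configurations with no refinement left is a decreasing sequence of sets of size at most `κ`,
so it stabilises at some `γ < κ⁺`.

If the stable set is empty, every clique `S` has `S^(γ) = ∅`. Indeed, by induction on `δ`, a
configuration whose boxes all meet `S^(δ)` survives `δ` steps: each box contains a point of
`S^(δ+1)` and a second point of `S^(δ)`, and small boxes around these points refine it. A single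
small box around a point of `S^(γ)` would thus survive.

Otherwise the stable set contains a refining sequence. The points lying in the closure of a box at
every level form a closed set without isolated points, and any tuple of its distinct points
eventually sits in distinct boxes, hence in every `U n m`: this is a perfect clique.
Finally a perfect set is its own derivative, so the two alternatives exclude each other.
-/

open Set Filter Cardinal FirstOrder

universe u v

/-- A topological space is completely metrizable if its topology is induced by a complete metric. -/
def CompletelyMetrizable (Y : Type*) [t : TopologicalSpace Y] : Prop :=
  ∃ m : MetricSpace Y, m.toUniformSpace.toTopologicalSpace = t ∧ @CompleteSpace Y m.toUniformSpace

/-- The weight of a topological space: the least cardinality of a topological basis. -/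
noncomputable def topWeight (X : Type u) [TopologicalSpace X] : Cardinal.{u} :=
  ⨅ B : { B : Set (Set X) // TopologicalSpace.IsTopologicalBasis B }, Cardinal.mk B.1

/-- A set is dense-in-itself if it is nonempty and has no isolated points
(in the subspace topology). -/
def DenseInItselfSet {X : Type*} [TopologicalSpace X] (S : Set X) : Prop :=
  S.Nonempty ∧ ∀ x ∈ S, AccPt x (𝓟 S)

/-- A set is perfect if it is nonempty, completely metrizable in the subspace topology,
and has no isolated points. -/
def IsPerfectSet {X : Type*} [TopologicalSpace X] (P : Set X) : Prop :=
  P.Nonempty ∧ CompletelyMetrizable P ∧ ∀ x ∈ P, AccPt x (𝓟 P)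

/-- The `γ`-th Cantor–Bendixson derivative of a set: iterate the operation of removing
isolated points, taking intersections at limit stages. -/
noncomputable def cbDeriv {X : Type u} [TopologicalSpace X] (A : Set X) (γ : Ordinal.{v}) :
    Set X :=
  Ordinal.limitRecOn γ A (fun _ ih => { x ∈ ih | AccPt x (𝓟 ih) })
    (fun o _ ih => ⋂ (o' : Ordinal.{v}) (h : o' < o), ih o' h)

/-- `S` is independent with respect to the `n`-ary relation `R`. -/
def IsRelIndep {X : Type*} {n : ℕ} (R : Set (Fin n → X)) (S : Set X) : Prop :=
  ∀ s : Fin n → X, (∀ i, s i ∈ S) → Function.Injective s → s ∉ R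

/-- `S` is a clique with respect to the `n`-ary relation `R`. -/
def IsRelClique {X : Type*} {n : ℕ} (R : Set (Fin n → X)) (S : Set X) : Prop :=
  ∀ s : Fin n → X, (∀ i, s i ∈ S) → Function.Injective s → s ∈ R

open Topology Function Metric TopologicalSpace CantorBendixson OrdinalApprox

theorem cbDeriv_eq_iteratedDerivedSet {X : Type u} [TopologicalSpace X] (A : Set X)
    (γ : Ordinal.{u}) : cbDeriv A γ = A ᵈ[γ] := by
  induction γ using Ordinal.limitRecOn with
  | zero => rw [iteratedDerivedSet_zero]; exact Ordinal.limitRecOn_zero ..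
  | add_one γ ih =>
    rw [iteratedDerivedSet_succ, relDerivedSet_apply, ← ih, inter_comm]
    exact Ordinal.limitRecOn_add_one ..
  | limit γ hγ ih =>
    rw [iteratedDerivedSet_limit hγ, iInter_subtype]
    unfold cbDeriv
    rw [Ordinal.limitRecOn_limit _ _ _ _ hγ]
    exact iInter₂_congr ih

theorem iteratedDerivedSet_subset {X : Type u} [TopologicalSpace X] (A : Set X)
    (γ : Ordinal.{u}) : A ᵈ[γ] ⊆ A :=
  (iteratedDerivedSet_antitone A zero_le).trans_eq iteratedDerivedSet_zero

section Pruning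

variable {α : Type u}

def pruneDeriv (D : α → α → Prop) : Set α →o Set α where
  toFun A := {c ∈ A | ∃ c' ∈ A, D c c'}
  monotone' _ _ h _ hc := ⟨h hc.1, hc.2.imp fun _ hc' => ⟨h hc'.1, hc'.2⟩⟩

theorem pruneDeriv_subset (D : α → α → Prop) (A : Set α) : pruneDeriv D A ⊆ A :=
  sep_subset _ _

/-- Each strict decrease of `A` below `(succ κ).ord` would drop a new element of `A 0`. -/
theorem Antitone.exists_add_one_eq {A : Ordinal.{u} → Set α} (hA : Antitone A)
    {κ : Cardinal.{u}} (hκ : #(A 0) ≤ κ) :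
    ∃ γ < (Order.succ κ).ord, A (γ + 1) = A γ := by
  by_contra! hne
  have hdrop : ∀ γ : Iio (Order.succ κ).ord, ∃ c ∈ A γ, c ∉ A (γ + 1) := fun γ =>
    not_subset.mp fun h => hne γ γ.2 ((hA (Order.le_succ _)).antisymm h)
  choose c hcA hcA' using hdrop
  have hinj : Injective fun γ => (⟨c γ, hA zero_le (hcA γ)⟩ : A 0) := by
    refine Injective.of_lt_imp_ne fun γ δ hγδ heq => hcA' γ ?_
    have : c γ = c δ := congrArg Subtype.val heq
    exact this ▸ hA (Order.add_one_le_of_lt hγδ) (hcA δ)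
  have := lift_mk_le_lift_mk_of_injective hinj
  rw [Cardinal.mk_Iio_ordinal, Cardinal.card_ord, lift_lift, Cardinal.lift_le] at this
  exact (Order.lt_succ κ).not_ge (this.trans hκ)

end Pruning

section MetricFacts

variable {X : Type*} [PseudoMetricSpace X]

theorem tendsto_two_mul_inv_two_pow : Tendsto (fun k : ℕ => 2 * (2 : ℝ)⁻¹ ^ k) atTop (𝓝 0) := by
  simpa using (tendsto_pow_atTop_nhds_zero_of_lt_one (by norm_num : (0 : ℝ) ≤ 2⁻¹)
    (by norm_num)).const_mul 2

theorem eventually_forall_closedBall_subset {K V : Set X} (hK : K.Finite) (hV : IsOpen V)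
    (hKV : K ⊆ V) : ∀ᶠ ε in 𝓝 (0 : ℝ), ∀ x ∈ K, closedBall x ε ⊆ V :=
  hK.eventually_all.2 fun _ hx => eventually_closedBall_subset (hV.mem_nhds (hKV hx))

theorem dist_le_of_subset_closedBall {b : Set X} {z : X} {ρ : ℝ} (hρ : 0 ≤ ρ)
    (hb : b ⊆ closedBall z ρ) {x y : X} (hx : x ∈ closure b) (hy : y ∈ closure b) :
    dist x y ≤ 2 * ρ := by
  have hcl : closure b ⊆ closedBall z ρ := isClosed_closedBall.closure_subset_iff.2 hb
  exact (dist_le_diam_of_mem isBounded_closedBall (hcl hx) (hcl hy)).trans (diam_closedBall hρ)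

theorem nonempty_iInter_closure_of_chain [CompleteSpace X] {g : ℕ → Set X}
    (hne : ∀ j, (g j).Nonempty) (hsub : ∀ j, closure (g (j + 1)) ⊆ g j)
    (hsmall : ∀ j, ∃ z, g j ⊆ closedBall z (2⁻¹ ^ j)) : (⋂ j, closure (g j)).Nonempty := by
  have hanti : Antitone g := antitone_nat_of_succ_le fun j => subset_closure.trans (hsub j)
  refine nonempty_iInter_of_nonempty_biInter (fun _ => isClosed_closure) (fun j => ?_)
    (fun N => ?_) (squeeze_zero (fun _ => diam_nonneg) (fun j => ?_) tendsto_two_mul_inv_two_pow)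
  · obtain ⟨z, hz⟩ := hsmall j
    exact (isBounded_closedBall.subset hz).closure
  · obtain ⟨x, hx⟩ := hne N
    exact ⟨x, mem_iInter₂.2 fun n hn => subset_closure (hanti hn hx)⟩
  · obtain ⟨z, hz⟩ := hsmall j
    rw [diam_closure]
    exact (diam_mono hz isBounded_closedBall).trans (diam_closedBall (by positivity))

end MetricFacts

section Configurations

variable {X : Type u} [MetricSpace X] {r : ℕ → ℕ} {B : Set (Set X)}
  {U : ∀ n, ℕ → Set (Fin (r n) → X)} {R : ∀ n, Set (Fin (r n) → X)}

/-- `c.1` are the boxes and `c.2` the level `ℓ` of the configuration; `U n m` are open sets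
with `R n = ⋂ m, U n m`. -/
structure IsConfig (B : Set (Set X)) (U : ∀ n, ℕ → Set (Fin (r n) → X))
    (c : Finset (Set X) × ℕ) : Prop where
  nonempty : c.1.Nonempty
  subset_basis : ↑c.1 ⊆ B
  nonempty_of_mem : ∀ b ∈ c.1, b.Nonempty
  exists_subset_closedBall : ∀ b ∈ c.1, ∃ z, b ⊆ closedBall z (2⁻¹ ^ c.2)
  pairwiseDisjoint : (c.1 : Set (Set X)).PairwiseDisjoint closure
  pi_subset : ∀ n ≤ c.2, ∀ m ≤ c.2, ∀ β : Fin (r n) → Set X, Injective β → (∀ i, β i ∈ c.1) →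
    univ.pi (fun i => closure (β i)) ⊆ U n m

structure Refines (c c' : Finset (Set X) × ℕ) : Prop where
  level_eq : c'.2 = c.2 + 1
  exists_parent : ∀ b' ∈ c'.1, ∃ b ∈ c.1, closure b' ⊆ b
  exists_two_children : ∀ b ∈ c.1,
    ∃ b₁ ∈ c'.1, ∃ b₂ ∈ c'.1, b₁ ≠ b₂ ∧ closure b₁ ⊆ b ∧ closure b₂ ⊆ b

variable (B U) in
noncomputable def configDeriv (γ : Ordinal.{u}) : Set (Finset (Set X) × ℕ) :=
  gfpApprox (pruneDeriv Refines) {c | IsConfig B U c} γ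

theorem configDeriv_subset (γ : Ordinal.{u}) : configDeriv B U γ ⊆ {c | IsConfig B U c} :=
  gfpApprox_le _

theorem configDeriv_antitone : Antitone (configDeriv B U) :=
  gfpApprox_anti_right _

theorem configDeriv_add_one (γ : Ordinal.{u}) :
    configDeriv B U (γ + 1) = pruneDeriv Refines (configDeriv B U γ) :=
  gfpApprox_add_one _ (pruneDeriv_subset _ _) γ

theorem mk_setOf_isConfig_le {κ : Cardinal.{u}} (hκ : ℵ₀ ≤ κ) (hB : #B = κ) :
    #{c | IsConfig B U c} ≤ κ := by
  classical
  have : Infinite B := Cardinal.infinite_iff.mpr (hB ▸ hκ)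
  calc #{c | IsConfig B U c}
      ≤ #(range fun p : Finset B × ℕ => (p.1.map (Embedding.subtype (· ∈ B)), p.2)) :=
        mk_le_mk_of_subset fun c hc =>
          ⟨(c.1.subtype (· ∈ B), c.2), Prod.ext (Finset.subtype_map_of_mem hc.subset_basis) rfl⟩
    _ ≤ #(Finset B × ℕ) := mk_range_le
    _ = κ := by simp [mk_finset_of_infinite, hB, mul_aleph0_eq hκ]

theorem exists_radius_of_finset (hU : ∀ n m, IsOpen (U n m)) (hRU : ∀ n m, R n ⊆ U n m)
    {S : Set X} (hS : ∀ n, IsRelClique (R n) S) {T : Finset X} (hTS : ↑T ⊆ S) {W : X → Set X}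
    (hW : ∀ x ∈ T, W x ∈ 𝓝 x) (ℓ : ℕ) :
    ∃ ε > 0, (∀ n ≤ ℓ, ∀ m ≤ ℓ, ∀ g : Fin (r n) → X, Injective g ∧ (∀ i, g i ∈ T) →
        closedBall g ε ⊆ U n m) ∧ (∀ x ∈ T, closedBall x ε ⊆ W x) ∧
      (∀ x ∈ T, ∀ y ∈ T, x ≠ y → ε < dist x y / 2) ∧ ε ≤ 2⁻¹ ^ ℓ := by
  have hsecure (n m : ℕ) : ∀ᶠ ε in 𝓝 (0 : ℝ),
      ∀ g ∈ {g : Fin (r n) → X | Injective g ∧ ∀ i, g i ∈ T}, closedBall g ε ⊆ U n m :=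
    eventually_forall_closedBall_subset
      ((Set.Finite.pi' fun _ => T.finite_toSet).subset fun g hg => hg.2) (hU n m)
      fun g hg => hRU n m (hS n g (fun i => hTS (hg.2 i)) hg.1)
  have hsep : ∀ᶠ ε in 𝓝 (0 : ℝ), ∀ x ∈ T, ∀ y ∈ T, x ≠ y → ε < dist x y / 2 := by
    refine T.eventually_all.2 fun x _ => T.eventually_all.2 fun y _ => ?_
    rcases eq_or_ne x y with rfl | hxy
    · exact .of_forall fun _ h => absurd rfl h
    · exact (eventually_lt_nhds (half_pos (dist_pos.2 hxy))).mono fun _ h _ => h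
  obtain ⟨ε, ⟨hsec, hεW, hεsep, hεℓ⟩, hε⟩ := (((((finite_Iic ℓ).eventually_all.2 fun n _ =>
      (finite_Iic ℓ).eventually_all.2 fun m _ => hsecure n m).and
    ((T.eventually_all.2 fun x hx => eventually_closedBall_subset (hW x hx)).and
    (hsep.and (eventually_le_nhds (pow_pos (by norm_num : (0 : ℝ) < 2⁻¹) ℓ))))).filter_mono
    nhdsWithin_le_nhds).and (self_mem_nhdsWithin (s := Ioi 0))).exists
  exact ⟨ε, hε, hsec, hεW, hεsep, hεℓ⟩

theorem exists_config_of_finset (hB : IsTopologicalBasis B) (hU : ∀ n m, IsOpen (U n m))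
    (hRU : ∀ n m, R n ⊆ U n m) {S : Set X} (hS : ∀ n, IsRelClique (R n) S) {T : Finset X}
    (hT : T.Nonempty) (hTS : ↑T ⊆ S) {W : X → Set X} (hW : ∀ x ∈ T, W x ∈ 𝓝 x) (ℓ : ℕ) :
    ∃ f : X → Set X, InjOn f T ∧ (∀ x ∈ T, x ∈ f x ∧ closure (f x) ⊆ W x) ∧
      IsConfig B U (T.image f, ℓ) := by
  obtain ⟨ε, hε, hsec, hεW, hεsep, hεℓ⟩ := exists_radius_of_finset hU hRU hS hTS hW ℓ
  choose! f hfB hxf hf using fun x (_ : x ∈ T) =>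
    hB.exists_subset_of_mem_open (mem_ball_self hε) isOpen_ball
  have hcl : ∀ x ∈ T, closure (f x) ⊆ closedBall x ε := fun x hx =>
    (closure_mono (hf x hx)).trans closure_ball_subset_closedBall
  have hdisj : ∀ x ∈ T, ∀ y ∈ T, x ≠ y → Disjoint (closure (f x)) (closure (f y)) :=
    fun x hx y hy hxy => (closedBall_disjoint_closedBall (by linarith [hεsep x hx y hy hxy])).mono
      (hcl x hx) (hcl y hy)
  have hinj : InjOn f T := fun x hx y hy hfxy => by_contra fun hxy =>
    (hdisj x hx y hy hxy).ne_of_mem (subset_closure (hxf x hx))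
      (by rw [← hfxy]; exact subset_closure (hxf x hx)) rfl
  refine ⟨f, hinj, fun x hx => ⟨hxf x hx, (hcl x hx).trans (hεW x hx)⟩, hT.image f, ?_, ?_, ?_,
    ?_, ?_⟩
  · simp only [Finset.coe_image]
    rintro _ ⟨x, hx, rfl⟩
    exact hfB x hx
  · simp only [Finset.mem_image]
    rintro _ ⟨x, hx, rfl⟩
    exact ⟨x, hxf x hx⟩
  · simp only [Finset.mem_image]
    rintro _ ⟨x, hx, rfl⟩
    exact ⟨x, (hf x hx).trans (ball_subset_closedBall.trans (closedBall_subset_closedBall hεℓ))⟩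
  · simp only [Finset.coe_image]
    rintro _ ⟨x, hx, rfl⟩ _ ⟨y, hy, rfl⟩ hne
    exact hdisj x hx y hy (ne_of_apply_ne f hne)
  · intro n hn m hm β hβ hβT
    choose g hgT hgβ using fun i => Finset.mem_image.1 (hβT i)
    have hg : Injective g := fun i j h => hβ (by rw [← hgβ i, ← hgβ j, h])
    calc univ.pi (fun i => closure (β i)) ⊆ univ.pi fun i => closedBall (g i) ε :=
          pi_mono fun i _ => hgβ i ▸ hcl (g i) (hgT i)
      _ = closedBall g ε := (closedBall_pi g hε.le).symm
      _ ⊆ U n m := hsec n hn m hm g ⟨hg, hgT⟩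

theorem IsConfig.exists_refines (hB : IsTopologicalBasis B) (hU : ∀ n m, IsOpen (U n m))
    (hRU : ∀ n m, R n ⊆ U n m) {S : Set X} (hS : ∀ n, IsRelClique (R n) S) {D : Set X}
    (hDS : D ⊆ S) {c : Finset (Set X) × ℕ} (hc : IsConfig B U c)
    (hmeet : ∀ b ∈ c.1, (b ∩ relDerivedSet D).Nonempty) :
    ∃ c', IsConfig B U c' ∧ Refines c c' ∧ ∀ b' ∈ c'.1, (b' ∩ D).Nonempty := by
  have hopen : ∀ b ∈ c.1, IsOpen b := fun b hb => hB.isOpen (hc.subset_basis hb)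
  have htwo : ∀ b ∈ c.1, ∃ p q, p ∈ b ∩ D ∧ q ∈ b ∩ D ∧ p ≠ q := by
    intro b hb
    obtain ⟨p, hpb, hpacc, hpD⟩ := hmeet b hb
    obtain ⟨q, ⟨hqb, hqD⟩, hqp⟩ := accPt_iff_nhds.1 hpacc b ((hopen b hb).mem_nhds hpb)
    exact ⟨p, q, ⟨hpb, hpD⟩, ⟨hqb, hqD⟩, hqp.symm⟩
  obtain ⟨b₀, hb₀⟩ := hc.nonempty
  have : Nonempty X := (hc.nonempty_of_mem b₀ hb₀).to_subtype.map Subtype.val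
  choose! p q hp hq hpq using htwo
  classical
  set T := c.1.image p ∪ c.1.image q
  have hT : ∀ y ∈ T, ∃ b ∈ c.1, y ∈ b ∩ D := by
    simp only [T, Finset.mem_union, Finset.mem_image]
    rintro y (⟨b, hb, rfl⟩ | ⟨b, hb, rfl⟩)
    exacts [⟨b, hb, hp b hb⟩, ⟨b, hb, hq b hb⟩]
  have hTD : ∀ y ∈ T, y ∈ D := fun y hy =>
    let ⟨_, _, _, hyD⟩ := hT y hy
    hyD
  have hpT : ∀ b ∈ c.1, p b ∈ T := fun b hb =>
    Finset.mem_union_left _ (Finset.mem_image_of_mem p hb)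
  have hqT : ∀ b ∈ c.1, q b ∈ T := fun b hb =>
    Finset.mem_union_right _ (Finset.mem_image_of_mem q hb)
  -- the closure of the new box around `y` must lie in every old box containing `y`
  let W y := ⋂ b ∈ c.1.filter (y ∈ ·), b
  have hW : ∀ y ∈ T, W y ∈ 𝓝 y := fun y _ => (biInter_finset_mem _).2 fun b hb =>
    (hopen b (Finset.mem_filter.1 hb).1).mem_nhds (Finset.mem_filter.1 hb).2
  have hWb : ∀ y, ∀ b ∈ c.1, y ∈ b → W y ⊆ b := fun y b hb hyb =>
    biInter_subset_of_mem (Finset.mem_filter.2 ⟨hb, hyb⟩)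
  obtain ⟨f, hinj, hf, hconf⟩ := exists_config_of_finset hB hU hRU hS ⟨p b₀, hpT b₀ hb₀⟩
    (fun y hy => hDS (hTD y hy)) hW (c.2 + 1)
  refine ⟨_, hconf, ⟨rfl, ?_, fun b hb => ?_⟩, ?_⟩
  · simp only [Finset.mem_image]
    rintro _ ⟨y, hy, rfl⟩
    obtain ⟨b, hb, hyb, -⟩ := hT y hy
    exact ⟨b, hb, (hf y hy).2.trans (hWb y b hb hyb)⟩
  · exact ⟨f (p b), Finset.mem_image_of_mem f (hpT b hb), f (q b),
      Finset.mem_image_of_mem f (hqT b hb), fun h => hpq b hb (hinj (hpT b hb) (hqT b hb) h),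
      (hf _ (hpT b hb)).2.trans (hWb _ b hb (hp b hb).1),
      (hf _ (hqT b hb)).2.trans (hWb _ b hb (hq b hb).1)⟩
  · simp only [Finset.mem_image]
    rintro _ ⟨y, hy, rfl⟩
    exact ⟨y, (hf y hy).1, hTD y hy⟩

theorem mem_configDeriv (hB : IsTopologicalBasis B) (hU : ∀ n m, IsOpen (U n m))
    (hRU : ∀ n m, R n ⊆ U n m) {S : Set X} (hS : ∀ n, IsRelClique (R n) S) (γ : Ordinal.{u})
    {c : Finset (Set X) × ℕ} (hc : IsConfig B U c) (hmeet : ∀ b ∈ c.1, (b ∩ S ᵈ[γ]).Nonempty) :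
    c ∈ configDeriv B U γ := by
  induction γ using Ordinal.limitRecOn generalizing c with
  | zero => rw [configDeriv, gfpApprox_zero]; exact hc
  | add_one γ ih =>
    simp only [iteratedDerivedSet_succ] at hmeet
    obtain ⟨c', hc', hcc', hmeet'⟩ := hc.exists_refines hB hU hRU hS
      (iteratedDerivedSet_subset S γ) hmeet
    rw [configDeriv_add_one]
    exact ⟨ih hc fun b hb => (hmeet b hb).mono (inter_subset_inter_right _ relDerivedSet_subset),
      c', ih hc' hmeet', hcc'⟩
  | limit γ hγ ih =>
    rw [configDeriv, gfpApprox_of_isSuccLimit _ hγ, iInf_eq_iInter, mem_iInter]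
    exact fun δ => ih δ δ.2 hc fun b hb =>
      (hmeet b hb).mono (inter_subset_inter_right _ (iteratedDerivedSet_antitone S δ.2.le))

end Configurations

section Fusion

variable {X : Type u} [MetricSpace X] {r : ℕ → ℕ} {B : Set (Set X)}
  {U : ∀ n, ℕ → Set (Fin (r n) → X)} {d : ℕ → Finset (Set X) × ℕ}

def fusionSet (d : ℕ → Finset (Set X) × ℕ) : Set X :=
  ⋂ k, ⋃ b ∈ (d k).1, closure b

theorem isClosed_fusionSet (d : ℕ → Finset (Set X) × ℕ) : IsClosed (fusionSet d) :=
  isClosed_iInter fun k => (d k).1.finite_toSet.isClosed_biUnion fun _ _ => isClosed_closure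

theorem le_level_of_refines (hdd : ∀ k, Refines (d k) (d (k + 1))) (k : ℕ) : k ≤ (d k).2 := by
  induction k with
  | zero => exact Nat.zero_le _
  | succ k ih => rw [(hdd k).level_eq]; omega

theorem antitone_biUnion_closure_of_refines (hdd : ∀ k, Refines (d k) (d (k + 1))) :
    Antitone fun k => ⋃ b ∈ (d k).1, closure b :=
  antitone_nat_of_succ_le fun k => iUnion₂_subset fun b' hb' =>
    let ⟨_, hb, hb'b⟩ := (hdd k).exists_parent b' hb'
    hb'b.trans (subset_closure.trans (subset_biUnion_of_mem (u := closure) hb))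

theorem exists_subset_closedBall_of_refines (hd : ∀ k, IsConfig B U (d k))
    (hdd : ∀ k, Refines (d k) (d (k + 1))) {k : ℕ} {b : Set X} (hb : b ∈ (d k).1) :
    ∃ z, b ⊆ closedBall z (2⁻¹ ^ k) :=
  let ⟨z, hz⟩ := (hd k).exists_subset_closedBall b hb
  ⟨z, hz.trans (closedBall_subset_closedBall
    (pow_le_pow_of_le_one (by norm_num) (by norm_num) (le_level_of_refines hdd k)))⟩

theorem closure_inter_fusionSet_nonempty [CompleteSpace X] (hd : ∀ k, IsConfig B U (d k))
    (hdd : ∀ k, Refines (d k) (d (k + 1))) {k : ℕ} {b : Set X} (hb : b ∈ (d k).1) :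
    (closure b ∩ fusionSet d).Nonempty := by
  have hchild : ∀ j, ∀ a ∈ (d j).1, ∃ a' ∈ (d (j + 1)).1, closure a' ⊆ a := fun j a ha =>
    let ⟨a', ha', _, _, _, hsub, _⟩ := (hdd j).exists_two_children a ha
    ⟨a', ha', hsub⟩
  choose! child hchild hchild_sub using hchild
  let g : ℕ → Set X := fun j => Nat.rec b (fun j g => child (k + j) g) j
  have hg : ∀ j, g j ∈ (d (k + j)).1 := by
    intro j
    induction j with
    | zero => exact hb
    | succ j ih => exact hchild _ _ ih
  obtain ⟨x, hx⟩ := nonempty_iInter_closure_of_chain (fun j => (hd _).nonempty_of_mem _ (hg j))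
    (fun j => hchild_sub _ _ (hg j)) fun j =>
      let ⟨z, hz⟩ := exists_subset_closedBall_of_refines hd hdd (hg j)
      ⟨z, hz.trans (closedBall_subset_closedBall
        (pow_le_pow_of_le_one (by norm_num) (by norm_num) (Nat.le_add_left j k)))⟩
  exact ⟨x, mem_iInter.1 hx 0, mem_iInter.2 fun i => antitone_biUnion_closure_of_refines hdd
    (Nat.le_add_left i k) (mem_biUnion (hg i) (mem_iInter.1 hx i))⟩

theorem preperfect_fusionSet [CompleteSpace X] (hd : ∀ k, IsConfig B U (d k))
    (hdd : ∀ k, Refines (d k) (d (k + 1))) : Preperfect (fusionSet d) := by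
  intro x hx
  rw [accPt_iff_nhds]
  intro V hV
  obtain ⟨ε, hε, hball⟩ := Metric.mem_nhds_iff.1 hV
  obtain ⟨k, hk⟩ := (tendsto_two_mul_inv_two_pow.eventually_lt_const hε).exists
  obtain ⟨b, hb, hxb⟩ := mem_iUnion₂.1 (mem_iInter.1 hx k)
  obtain ⟨b₁, hb₁, b₂, hb₂, hne, hsub₁, hsub₂⟩ := (hdd k).exists_two_children b hb
  obtain ⟨b', hb', hb'b, hxb'⟩ : ∃ b' ∈ (d (k + 1)).1, closure b' ⊆ b ∧ x ∉ closure b' := by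
    by_cases h : x ∈ closure b₁
    · exact ⟨b₂, hb₂, hsub₂, fun h₂ => ((hd _).pairwiseDisjoint hb₁ hb₂ hne).ne_of_mem h h₂ rfl⟩
    · exact ⟨b₁, hb₁, hsub₁, h⟩
  obtain ⟨y, hyb', hyP⟩ := closure_inter_fusionSet_nonempty hd hdd hb'
  obtain ⟨z, hz⟩ := exists_subset_closedBall_of_refines hd hdd hb
  refine ⟨y, ⟨hball (mem_ball.2 ?_), hyP⟩, fun h => hxb' (h ▸ hyb')⟩
  calc dist y x ≤ 2 * 2⁻¹ ^ k :=
        dist_le_of_subset_closedBall (by positivity) hz (subset_closure (hb'b hyb')) hxb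
    _ < ε := hk

theorem isRelClique_fusionSet {R : ∀ n, Set (Fin (r n) → X)} (hd : ∀ k, IsConfig B U (d k))
    (hdd : ∀ k, Refines (d k) (d (k + 1))) (hUR : ∀ n, ⋂ m, U n m ⊆ R n) (n : ℕ) :
    IsRelClique (R n) (fusionSet d) := by
  intro y hy hinj
  refine hUR n (mem_iInter.2 fun m => ?_)
  have hfar : ∀ i j, i ≠ j → ∀ᶠ k in atTop, 2 * 2⁻¹ ^ k < dist (y i) (y j) := fun i j hij =>
    tendsto_two_mul_inv_two_pow.eventually_lt_const (dist_pos.2 (hinj.ne hij))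
  obtain ⟨k, hnk, hmk, hsep⟩ := ((eventually_ge_atTop n).and ((eventually_ge_atTop m).and
    (eventually_all.2 fun i => eventually_all.2 fun j =>
      eventually_imp_distrib_left.2 (hfar i j)))).exists
  choose β hβ hyβ using fun i => mem_iUnion₂.1 (mem_iInter.1 (hy i) k)
  have hβinj : Injective β := fun i j hij => by_contra fun hne => (hsep i j hne).not_ge <|
    let ⟨z, hz⟩ := exists_subset_closedBall_of_refines hd hdd (hβ i)
    dist_le_of_subset_closedBall (by positivity) hz (hyβ i) (hij ▸ hyβ j)
  exact (hd k).pi_subset n (hnk.trans (le_level_of_refines hdd k)) m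
    (hmk.trans (le_level_of_refines hdd k)) β hβinj hβ fun i _ => hyβ i

theorem exists_isPerfectSet_isRelClique [CompleteSpace X] {R : ∀ n, Set (Fin (r n) → X)}
    (hUR : ∀ n, ⋂ m, U n m ⊆ R n) {A : Set (Finset (Set X) × ℕ)}
    (hA : A ⊆ {c | IsConfig B U c}) (hAA : A ⊆ pruneDeriv Refines A) (hne : A.Nonempty) :
    ∃ P, IsPerfectSet P ∧ ∀ n, IsRelClique (R n) P := by
  obtain ⟨c₀, hc₀⟩ := hne
  choose! next hnext hrefines using fun c (hc : c ∈ A) => (hAA hc).2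
  let d k := next^[k] c₀
  have hdA : ∀ k, d k ∈ A := by
    intro k
    induction k with
    | zero => exact hc₀
    | succ k ih => simpa only [d, iterate_succ_apply'] using hnext _ ih
  have hdd : ∀ k, Refines (d k) (d (k + 1)) := fun k => by
    simpa only [d, iterate_succ_apply'] using hrefines _ (hdA k)
  have hd : ∀ k, IsConfig B U (d k) := fun k => hA (hdA k)
  obtain ⟨x, -, hx⟩ := closure_inter_fusionSet_nonempty hd hdd (hd 0).nonempty.choose_spec
  exact ⟨fusionSet d, ⟨⟨x, hx⟩, ⟨_, rfl, (isClosed_fusionSet d).completeSpace_coe⟩,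
    preperfect_fusionSet hd hdd⟩, isRelClique_fusionSet hd hdd hUR⟩

end Fusion

theorem exists_isTopologicalBasis_mk_eq_topWeight (X : Type u) [TopologicalSpace X] :
    ∃ B : Set (Set X), IsTopologicalBasis B ∧ #B = topWeight X :=
  have : Nonempty {B : Set (Set X) // IsTopologicalBasis B} := ⟨⟨_, isTopologicalBasis_opens⟩⟩
  let ⟨⟨B, hB⟩, h⟩ := ciInf_mem fun B : {B : Set (Set X) // IsTopologicalBasis B} => #B.1
  ⟨B, hB, h⟩

theorem exists_iteratedDerivedSet_eq_empty_or_exists_isPerfectSet {X : Type u} [MetricSpace X]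
    [CompleteSpace X] {κ : Cardinal.{u}} (hκ : ℵ₀ ≤ κ) (hw : topWeight X = κ) {r : ℕ → ℕ}
    {R : ∀ n, Set (Fin (r n) → X)} (hR : ∀ n, IsGδ (R n)) :
    (∃ γ < (Order.succ κ).ord, ∀ S, (∀ n, IsRelClique (R n) S) → S ᵈ[γ] = ∅) ∨
      ∃ P, IsPerfectSet P ∧ ∀ n, IsRelClique (R n) P := by
  obtain ⟨B, hB, hBκ⟩ := exists_isTopologicalBasis_mk_eq_topWeight X
  choose U hU hRU using fun n => (hR n).eq_iInter_nat
  have hRU' : ∀ n m, R n ⊆ U n m := fun n m => (hRU n).trans_subset (iInter_subset _ m)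
  obtain ⟨γ, hγ, hstable⟩ := configDeriv_antitone.exists_add_one_eq
    ((mk_le_mk_of_subset (configDeriv_subset 0)).trans (mk_setOf_isConfig_le hκ (hBκ.trans hw)))
  rcases (configDeriv B U γ).eq_empty_or_nonempty with hempty | hne
  · refine .inl ⟨γ, hγ, fun S hS => eq_empty_of_forall_notMem fun x hx => ?_⟩
    obtain ⟨f, -, hf, hconf⟩ := exists_config_of_finset hB hU hRU' hS (Finset.singleton_nonempty x)
      (by simpa using iteratedDerivedSet_subset S γ hx)
      (W := fun _ => univ) (fun _ _ => univ_mem) 0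
    refine hempty.subset (mem_configDeriv hB hU hRU' hS γ hconf ?_)
    simp only [Finset.image_singleton, Finset.mem_singleton, forall_eq]
    exact ⟨x, (hf x (Finset.mem_singleton_self x)).1, hx⟩
  · refine .inr (exists_isPerfectSet_isRelClique (fun n => (hRU n).superset)
      (configDeriv_subset γ) ?_ hne)
    rw [← configDeriv_add_one, hstable]

theorem statement1_general {X : Type u} [TopologicalSpace X] (hX : CompletelyMetrizable X)
    (κ : Cardinal.{u}) (hκ : ℵ₀ ≤ κ) (hw : topWeight X = κ)
    (r : ℕ → ℕ) (R : ∀ n : ℕ, Set (Fin (r n) → X))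
    (hR : ∀ n, IsGδ (R n)) :
    Xor'
      (∃ γ : Ordinal.{u}, γ < (Order.succ κ).ord ∧
        ∀ S : Set X, (∀ n, IsRelClique (R n) S) → cbDeriv S γ = ∅)
      (∃ P : Set X, IsPerfectSet P ∧ ∀ n, IsRelClique (R n) P) := by
  obtain ⟨m, rfl, _⟩ := hX
  simp only [cbDeriv_eq_iteratedDerivedSet]
  refine (xor_iff_or_and_not_and _ _).2
    ⟨exists_iteratedDerivedSet_eq_empty_or_exists_isPerfectSet hκ hw hR, ?_⟩
  rintro ⟨⟨γ, -, hγ⟩, P, hP, hPR⟩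
  have hPγ : P ᵈ[γ] = P := iteratedDerivedSet_constant_iff_preperfect.1 hP.2.2 γ
  exact hP.1.ne_empty (hPγ ▸ hγ P hPR)

theorem statement1 {X : Type u} [TopologicalSpace X] (hX : CompletelyMetrizable X)
    (κ : Cardinal.{u}) (hκ : ℵ₀ ≤ κ) (hw : topWeight X = κ)
    (r : ℕ → ℕ) (hr : ∀ n, 1 ≤ r n) (R : ∀ n : ℕ, Set (Fin (r n) → X))
    (hR : ∀ n, IsGδ (R n)) :
    Xor'
      (∃ γ : Ordinal.{u}, γ < (Order.succ κ).ord ∧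
        ∀ S : Set X, (∀ n, IsRelClique (R n) S) → cbDeriv S γ = ∅)
      (∃ P : Set X, IsPerfectSet P ∧ ∀ n, IsRelClique (R n) P) :=
  statement1_general hX κ hκ hw r R hR
end

section
/- Let G be a completely metrizable topological group. If G has a free abelian subgroup which is dense-in-itself, then G contains a free abelian subgroup generated by a perfect set, i.e. there exists a perfect set P ⊆ G generating a free abelian subgroup with P as a free basis. -/
open Set Filter Cardinal FirstOrder

universe u v

/-- `S` generates a free abelian subgroup of `G` with `S` as a free basis: any two elements of
the generated subgroup commute and no nontrivial product of powers of pairwise distinct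
elements of `S` is the identity. -/
def IsFreeAbelianBasis {G : Type*} [Group G] (S : Set G) : Prop :=
  (∀ x ∈ Subgroup.closure S, ∀ y ∈ Subgroup.closure S, x * y = y * x) ∧
  ∀ n : ℕ, 1 ≤ n → ∀ s : Fin n → G, (∀ i, s i ∈ S) → Function.Injective s →
    ∀ k : Fin n → ℤ, (∀ i, k i ≠ 0) → (List.ofFn fun i => s i ^ k i).prod ≠ 1

/-!
Replace `G` by the closure `K` of `H`: a complete metric abelian group in which `H` is a
torsion-free subgroup without isolated points. Build a Cantor scheme of closed balls centred in
`H`, with `2ⁿ` balls of a common radius `≤ 2⁻ⁿ` at level `n`, such that no relation with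
coefficients bounded by `n` holds among points taken from distinct balls of level `n`. The
centres of a new level can be chosen because, in a torsion-free abelian group, each of the
finitely many bounded relations excludes at most one value of a new centre, while every ball
meets `H` in infinitely many points; the condition is open, so it survives shrinking the balls.
The branches of the scheme converge to a continuous injective map from the Cantor space, whose
image is compact and perfect, and a relation among finitely many of its points would be a
bounded relation at a level separating them.
-/

open Topology Function Metric PiNat

theorem finite_setOf_abs_le (ι : Type*) [Finite ι] (B : ℕ) :
    {k : ι → ℤ | ∀ i, |k i| ≤ B}.Finite := by
  simpa [Set.pi, abs_le] using
    Set.Finite.pi (t := fun _ : ι => Icc (-(B : ℤ)) B) fun _ => finite_Icc _ _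

theorem Preperfect.infinite {X : Type*} [TopologicalSpace X] [T1Space X] {C : Set X}
    (hC : Preperfect C) (hne : C.Nonempty) : C.Infinite :=
  .of_accPt (hC _ hne.some_mem)

section IndependentUpTo

variable {A : Type*} [CommGroup A] {ι : Type*} [Fintype ι]

def IndependentUpTo (B : ℕ) (z : ι → A) : Prop :=
  ∀ k : ι → ℤ, (∀ i, |k i| ≤ B) → ∏ i, z i ^ k i = 1 → k = 0

theorem IndependentUpTo.map {A' : Type*} [CommGroup A'] {B : ℕ} {z : ι → A}
    (hz : IndependentUpTo B z) {f : A →* A'} (hf : Injective f) :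
    IndependentUpTo B (f ∘ z) := by
  intro k hk hprod
  refine hz k hk (hf ?_)
  simpa [map_prod, map_zpow] using hprod

theorem IndependentUpTo.comp_injective {κ : Type*} [Fintype κ] {B : ℕ} {z : ι → A}
    (hz : IndependentUpTo B z) {σ : κ → ι} (hσ : Injective σ) :
    IndependentUpTo B (z ∘ σ) := by
  intro k hk hprod
  have hext : extend σ k 0 = 0 := by
    refine hz _ (fun i => ?_) ?_
    · by_cases hi : ∃ j, σ j = i
      · obtain ⟨j, rfl⟩ := hi
        simpa [hσ.extend_apply] using hk j
      · simp [extend_apply' _ _ _ hi]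
    · rw [← hprod]
      refine (Fintype.prod_of_injective σ hσ _ _ (fun i hi => ?_) fun j => ?_).symm
      · simp [extend_apply' _ _ _ (by simpa using hi)]
      · simp [hσ.extend_apply]
  funext j
  simpa [hσ.extend_apply] using congrFun hext (σ j)

theorem isOpen_setOf_independentUpTo [TopologicalSpace A] [IsTopologicalGroup A] [T1Space A]
    (B : ℕ) : IsOpen {z : ι → A | IndependentUpTo B z} := by
  have : {z : ι → A | IndependentUpTo B z} =
      ⋂ k ∈ {k : ι → ℤ | ∀ i, |k i| ≤ B}, {z | ∏ i, z i ^ k i = 1 → k = 0} := by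
    ext z; simp [IndependentUpTo]
  rw [this]
  refine (finite_setOf_abs_le ι B).isOpen_biInter fun k _ => ?_
  by_cases hk : k = 0
  · simp [hk]
  · simp only [hk, imp_false]
    exact isOpen_compl_singleton.preimage
      (continuous_finsetProd _ fun i _ => (continuous_apply i).zpow (k i))

theorem exists_independentUpTo_mem [IsMulTorsionFree A] (B : ℕ) (W : ι → Set A)
    (hW : ∀ i, (W i).Infinite) : ∃ z : ι → A, (∀ i, z i ∈ W i) ∧ IndependentUpTo B z := by
  revert W
  refine Finite.induction_empty_option (P := fun ι => ∀ [Fintype ι] (W : ι → Set A),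
    (∀ i, (W i).Infinite) → ∃ z : ι → A, (∀ i, z i ∈ W i) ∧ IndependentUpTo B z) ?_ ?_ ?_ ι
  · intro α β e h _ W hW
    let _ := Fintype.ofEquiv β e.symm
    obtain ⟨z, hzW, hz⟩ := h (W ∘ e) fun i => hW (e i)
    refine ⟨z ∘ e.symm, fun i => by simpa using hzW (e.symm i), ?_⟩
    simpa [comp_assoc] using hz.comp_injective e.symm.injective
  · intro _ W _
    exact ⟨isEmptyElim, isEmptyElim, fun k _ _ => funext isEmptyElim⟩
  · intro α _ h inst W hW
    obtain rfl : inst = instFintypeOption := Subsingleton.elim _ _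
    obtain ⟨z, hzW, hz⟩ := h (W ∘ some) fun i => hW (some i)
    set bad : (Option α → ℤ) → Set A := fun k =>
      {x | k none ≠ 0 ∧ x ^ k none * ∏ i, z i ^ k (some i) = 1}
    -- a relation with nonzero coefficient at `none` pins down `x ^ k none`, hence `x`
    have hbad : ∀ k, (bad k).Subsingleton := by
      rintro k x ⟨hk, hx⟩ y ⟨-, hy⟩
      exact zpow_left_injective hk (mul_right_cancel (hx.trans hy.symm))
    have hfin : (⋃ k ∈ {k : Option α → ℤ | ∀ i, |k i| ≤ B}, bad k).Finite :=
      (finite_setOf_abs_le _ B).biUnion fun k _ => (hbad k).finite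
    obtain ⟨x, hxW, hxbad⟩ := ((hW none).sdiff hfin).nonempty
    refine ⟨fun o => o.elim x z, Option.rec hxW hzW, fun k hk hprod => ?_⟩
    rw [Fintype.prod_option] at hprod
    have hnone : k none = 0 := by
      by_contra hne
      exact hxbad (mem_biUnion hk ⟨hne, hprod⟩)
    have hsome : k ∘ some = 0 :=
      hz _ (fun i => hk (some i)) (by simpa [hnone] using hprod)
    funext o
    cases o with
    | none => exact hnone
    | some i => exact congrFun hsome i

end IndependentUpTo

theorem exists_independentUpTo_near {A : Type*} [CommGroup A] [MetricSpace A]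
    [IsTopologicalGroup A] (H : Subgroup A) [IsMulTorsionFree H] (hH : Preperfect (H : Set A))
    (B : ℕ) {ι : Type*} [Fintype ι] {U : ι → Set A} (hU : ∀ i, IsOpen (U i))
    (hUH : ∀ i, (U i ∩ H).Nonempty) :
    ∃ c : ι → A, (∀ i, c i ∈ U i ∩ H) ∧
      ∃ ε > 0, ∀ z : ι → A, (∀ i, dist (z i) (c i) < ε) → IndependentUpTo B z := by
  have hW : ∀ i, ((↑) ⁻¹' U i : Set H).Infinite := fun i => .of_image Subtype.val <| by
    simpa [image_preimage_eq_inter_range] using (hH.open_inter (hU i)).infinite (hUH i)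
  obtain ⟨c, hcU, hc⟩ := exists_independentUpTo_mem B (fun i => ((↑) ⁻¹' U i : Set H)) hW
  refine ⟨H.subtype ∘ c, fun i => ⟨hcU i, (c i).2⟩, ?_⟩
  obtain ⟨ε, hε, hball⟩ := Metric.isOpen_iff.mp (isOpen_setOf_independentUpTo B)
    (H.subtype ∘ c) (hc.map H.subtype_injective)
  exact ⟨ε, hε, fun z hz => hball ((dist_pi_lt_iff hε).mpr hz)⟩

theorem PiNat.eventually_injOn_res {α : Type*} {s : Set (ℕ → α)} (hs : s.Finite) :
    ∀ᶠ n in atTop, InjOn (res · n) s := by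
  have hpair : ∀ p ∈ s ×ˢ s, ∀ᶠ n in atTop, res p.1 n = res p.2 n → p.1 = p.2 := by
    rintro ⟨x, y⟩ -
    by_cases hxy : x = y
    · exact .of_forall fun _ _ => hxy
    obtain ⟨t, ht⟩ := ne_iff.mp hxy
    filter_upwards [eventually_gt_atTop t] with n hn hres
    exact absurd (res_eq_res.mp hres hn) ht
  filter_upwards [(hs.prod hs).eventually_all.mpr hpair] with n hn x hx y hy
  exact hn (x, y) ⟨hx, hy⟩

instance PiNat.perfectSpace {α : Type*} [TopologicalSpace α] [Nontrivial α] :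
    PerfectSpace (ℕ → α) := by
  refine perfectSpace_iff_forall_not_isolated.mpr fun b => mem_closure_iff_nhdsWithin_neBot.mp ?_
  choose a ha using fun n => exists_ne (b n)
  have hlim : Tendsto (fun n => update b n (a n)) atTop (𝓝 b) :=
    tendsto_pi_nhds.mpr fun j => tendsto_const_nhds.congr' <|
      (eventually_gt_atTop j).mono fun n hn => (update_of_ne hn.ne _ _).symm
  exact mem_closure_of_tendsto hlim (.of_forall fun n h => ha n (by simpa using congrFun h n))

theorem exists_continuous_mem_closedBall {A : Type*} [MetricSpace A] [CompleteSpace A]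
    (c : ∀ n, List.Vector Bool n → A) {r : ℕ → ℝ} (hr0 : ∀ n, 0 ≤ r n)
    (hr : Tendsto r atTop (𝓝 0))
    (hnest : ∀ n w, closedBall (c (n + 1) w) (r (n + 1)) ⊆ closedBall (c n w.tail) (r n)) :
    ∃ Y : (ℕ → Bool) → A, Continuous Y ∧
      ∀ b n, Y b ∈ closedBall (c n ⟨res b n, res_length b n⟩) (r n) := by
  set S : List Bool → Set A := fun l => closedBall (c l.length ⟨l, rfl⟩) (r l.length)
  have hS : ∀ l n (h : l.length = n), S l = closedBall (c n ⟨l, h⟩) (r n) := by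
    rintro l _ rfl; rfl
  have hanti : CantorScheme.ClosureAntitone S :=
    CantorScheme.Antitone.closureAntitone (fun l _ => hnest l.length _)
      fun _ => isClosed_closedBall
  have hdiam : CantorScheme.VanishingDiam S := by
    have hlim : Tendsto (fun n => 2 * ENNReal.ofReal (r n)) atTop (𝓝 0) := by
      simpa using ENNReal.Tendsto.const_mul (a := 2) (ENNReal.tendsto_ofReal hr)
        (Or.inr ENNReal.ofNat_ne_top)
    refine fun b => tendsto_of_tendsto_of_tendsto_of_le_of_le tendsto_const_nhds hlim
      (fun _ => zero_le) fun n => ?_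
    rw [hS _ n (res_length b n), ← closedEBall_ofReal (hr0 n)]
    exact ediam_closedEBall_le
  have hdom := hanti.map_of_vanishingDiam hdiam fun l => ⟨_, mem_closedBall_self (hr0 _)⟩
  refine ⟨fun b => (CantorScheme.inducedMap S).2 ⟨b, hdom ▸ mem_univ b⟩,
    hdiam.map_continuous.comp (continuous_id.subtype_mk _), fun b n => ?_⟩
  rw [← hS]
  exact CantorScheme.map_mem _ n

section SchemeLevel

variable {A : Type*} [CommGroup A] [MetricSpace A] (H : Subgroup A)

structure IsSchemeLevel (n : ℕ) (c : List.Vector Bool n → A) (r : ℝ) : Prop where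
  mem : ∀ w, c w ∈ H
  pos : 0 < r
  le : r ≤ (1 / 2) ^ n
  independentUpTo :
    ∀ z : List.Vector Bool n → A, (∀ w, dist (z w) (c w) ≤ r) → IndependentUpTo n z

theorem isSchemeLevel_zero : IsSchemeLevel H 0 (fun _ => 1) 1 where
  mem _ := H.one_mem
  pos := one_pos
  le := by simp
  independentUpTo _ _ k hk _ := funext fun w => abs_nonpos_iff.mp (by exact_mod_cast hk w)

variable [IsTopologicalGroup A] {H} [IsMulTorsionFree H] (hH : Preperfect (H : Set A))
include hH

theorem IsSchemeLevel.exists_succ {n : ℕ} {c : List.Vector Bool n → A} {r : ℝ}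
    (h : IsSchemeLevel H n c r) : ∃ c' r', IsSchemeLevel H (n + 1) c' r' ∧
      ∀ w, closedBall (c' w) r' ⊆ closedBall (c w.tail) r := by
  obtain ⟨c', hc', ε, hε, hind⟩ := exists_independentUpTo_near H hH (n + 1)
    (U := fun w : List.Vector Bool (n + 1) => ball (c w.tail) (r / 2)) (fun _ => isOpen_ball)
    fun w => ⟨c w.tail, mem_ball_self (half_pos h.pos), h.mem _⟩
  have hr' : min (ε / 2) (r / 2) ≤ r / 2 := min_le_right _ _
  refine ⟨c', min (ε / 2) (r / 2), ⟨fun w => (hc' w).2, by positivity [h.pos], ?_, ?_⟩,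
    fun w => closedBall_subset_closedBall' ?_⟩
  · rw [pow_succ]
    linarith [h.le]
  · exact fun z hz => hind z fun w =>
      (hz w).trans_lt ((min_le_left _ _).trans_lt (half_lt_self hε))
  · linarith [mem_ball.mp (hc' w).1]

theorem exists_isSchemeLevel_seq : ∃ (c : ∀ n, List.Vector Bool n → A) (r : ℕ → ℝ),
    (∀ n, IsSchemeLevel H n (c n) (r n)) ∧
      ∀ n w, closedBall (c (n + 1) w) (r (n + 1)) ⊆ closedBall (c n w.tail) (r n) := by
  let L n := {p : (List.Vector Bool n → A) × ℝ // IsSchemeLevel H n p.1 p.2}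
  have step (n : ℕ) (p : L n) : ∃ q : L (n + 1),
      ∀ w, closedBall (q.1.1 w) q.1.2 ⊆ closedBall (p.1.1 w.tail) p.1.2 :=
    let ⟨c', r', h', hsub⟩ := p.2.exists_succ hH
    ⟨⟨(c', r'), h'⟩, hsub⟩
  choose next hnext using step
  let seq (n : ℕ) : L n := Nat.rec ⟨(fun _ => 1, 1), isSchemeLevel_zero H⟩ next n
  exact ⟨fun n => (seq n).1.1, fun n => (seq n).1.2, fun n => (seq n).2,
    fun n => hnext n (seq n)⟩

end SchemeLevel

theorem exists_continuous_linearIndependent {A : Type*} [CommGroup A] [MetricSpace A]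
    [IsTopologicalGroup A] [CompleteSpace A] {H : Subgroup A} [IsMulTorsionFree H]
    (hH : Preperfect (H : Set A)) :
    ∃ Y : (ℕ → Bool) → A, Continuous Y ∧ LinearIndependent ℤ (fun b => Additive.ofMul (Y b)) := by
  obtain ⟨c, r, hlevel, hnest⟩ := exists_isSchemeLevel_seq hH
  have hr : Tendsto r atTop (𝓝 0) :=
    squeeze_zero (fun n => (hlevel n).pos.le) (fun n => (hlevel n).le)
      (tendsto_pow_atTop_nhds_zero_of_lt_one (by norm_num) (by norm_num))
  obtain ⟨Y, hYc, hY⟩ := exists_continuous_mem_closedBall c (fun n => (hlevel n).pos.le) hr hnest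
  refine ⟨Y, hYc, linearIndependent_iff'.mpr fun s g hg => ?_⟩
  obtain ⟨n, hinj, hg_le⟩ : ∃ n : ℕ, InjOn (res · n) (s : Set (ℕ → Bool)) ∧ ∀ b ∈ s, |g b| ≤ n :=
    ((eventually_injOn_res s.finite_toSet).and <| s.finite_toSet.eventually_all.mpr fun b _ =>
      tendsto_natCast_atTop_atTop.eventually_ge_atTop |g b|).exists
  let σ : s → List.Vector Bool n := fun b => ⟨res b n, res_length _ _⟩
  have hσ : Injective σ := fun b b' h => Subtype.ext (hinj b.2 b'.2 (congrArg Subtype.val h))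
  have hz := (hlevel n).independentUpTo (extend σ (fun b => Y b) (c n)) fun w => by
    by_cases hw : ∃ b, σ b = w
    · obtain ⟨b, rfl⟩ := hw
      rw [hσ.extend_apply]
      exact hY b n
    · rw [extend_apply' _ _ _ hw, dist_self]
      exact (hlevel n).pos.le
  have hprod : ∏ b ∈ s, Y b ^ g b = 1 := by
    apply Additive.ofMul.injective
    simpa [ofMul_prod, ofMul_zpow] using hg
  have := hz.comp_injective hσ (fun b => g b) (fun b => hg_le b b.2) <| by
    simpa [hσ.extend_apply, Finset.prod_attach s fun b => Y b ^ g b] using hprod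
  exact fun b hb => congrFun this ⟨b, hb⟩

instance FreeAbelianGroup.instIsAddTorsionFree (ι : Type*) :
    IsAddTorsionFree (FreeAbelianGroup ι) :=
  (FreeAbelianGroup.equivFinsupp ι).injective.isAddTorsionFree
    (FreeAbelianGroup.equivFinsupp ι).toAddMonoidHom

theorem Preperfect.preimage_subtype_val {X : Type*} [TopologicalSpace X] {S C : Set X}
    (hC : Preperfect C) (hCS : C ⊆ S) : Preperfect ((↑) ⁻¹' C : Set S) := by
  rw [preperfect_iff_nhds] at hC ⊢
  intro x hx U hU
  obtain ⟨V, hV, hVU⟩ := mem_nhds_subtype S x U |>.mp hU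
  obtain ⟨y, ⟨hyV, hyC⟩, hyx⟩ := hC x hx V hV
  exact ⟨⟨y, hCS hyC⟩, ⟨hVU hyV, hyC⟩, fun h => hyx (congrArg Subtype.val h)⟩

theorem IsCompact.completelyMetrizable {X : Type*} [MetricSpace X] {K : Set X}
    (hK : IsCompact K) : CompletelyMetrizable K :=
  have := isCompact_iff_compactSpace.mp hK
  ⟨Subtype.metricSpace, rfl, complete_of_compact⟩

theorem isPerfectSet_range {X Y : Type*} [TopologicalSpace X] [CompactSpace X] [PerfectSpace X]
    [Nonempty X] [MetricSpace Y] {f : X → Y} (hf : Continuous f) (hinj : Injective f) :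
    IsPerfectSet (range f) := by
  refine ⟨range_nonempty f, (isCompact_range hf).completelyMetrizable, ?_⟩
  rintro _ ⟨x, rfl⟩
  have hx : AccPt x ⊤ := by simpa [AccPt] using PerfectSpace.not_isolated x
  simpa using hx.map hf.continuousAt hinj

theorem isFreeAbelianBasis_range {G A X : Type*} [Group G] [CommGroup A] (φ : A →* G)
    (hφ : Injective φ) {Y : X → A} (hY : LinearIndependent ℤ (fun x => Additive.ofMul (Y x))) :
    IsFreeAbelianBasis (range (φ ∘ Y)) := by
  refine ⟨fun x hx y hy => ?_, fun n hn s hs hinj k hk hprod => ?_⟩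
  · have hle : Subgroup.closure (range (φ ∘ Y)) ≤ φ.range :=
      (Subgroup.closure_le _).mpr (range_comp_subset_range _ _)
    obtain ⟨a, rfl⟩ := hle hx
    obtain ⟨b, rfl⟩ := hle hy
    rw [← map_mul, ← map_mul, mul_comm]
  · choose b hb using hs
    have hb_inj : Injective b := fun i j h => hinj (by rw [← hb i, ← hb j, h])
    have hrel : ∏ i, Y (b i) ^ k i = 1 := by
      apply hφ
      rw [← List.prod_ofFn, map_list_prod, List.map_ofFn, map_one, ← hprod]
      simp [← hb, comp_def]
    refine hk ⟨0, hn⟩ (Fintype.linearIndependent_iff.mp (hY.comp b hb_inj) k ?_ _)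
    apply Additive.toMul.injective
    simpa [toMul_sum, toMul_zsmul] using hrel

theorem statement9 {G : Type u} [Group G] [TopologicalSpace G] [IsTopologicalGroup G]
    (hG : CompletelyMetrizable G)
    (h : ∃ H : Subgroup G, (∀ x ∈ H, ∀ y ∈ H, x * y = y * x) ∧
      (∃ ι : Type u, Nonempty (H ≃* Multiplicative (FreeAbelianGroup ι))) ∧
      DenseInItselfSet (H : Set G)) :
    ∃ P : Set G, IsPerfectSet P ∧ IsFreeAbelianBasis P := by
  obtain ⟨m, rfl, _⟩ := hG
  obtain ⟨H, hcomm, ⟨ι, ⟨e⟩⟩, -, hH⟩ := h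
  let K := H.topologicalClosure
  let _ : CommGroup K := H.commGroupTopologicalClosure fun x y => Subtype.ext (hcomm x x.2 y y.2)
  have : CompleteSpace K := H.isClosed_topologicalClosure.completeSpace_coe
  have hle : H ≤ K := H.le_topologicalClosure
  let f := (Subgroup.subgroupOfEquivOfLe hle).trans e
  have : IsMulTorsionFree (H.subgroupOf K) := f.injective.isMulTorsionFree f.toMonoidHom
  obtain ⟨Y, hYc, hY⟩ := exists_continuous_linearIndependent (H := H.subgroupOf K)
    (Preperfect.preimage_subtype_val hH hle)
  exact ⟨_, isPerfectSet_range (continuous_subtype_val.comp hYc)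
    (Subtype.val_injective.comp hY.injective),
    isFreeAbelianBasis_range K.subtype K.subtype_injective hY⟩
end
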